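/- Let k be a field and A a finite-dimensional local symmetric k-algebra. Let X be a bounded cochain complex of nonzero finitely generated projective right A-modules concentrated in degrees a ≤ n ≤ b with X^b ≠ 0, and Y a bounded cochain complex of nonzero finitely generated projective right A-modules concentrated in degrees c ≤ n ≤ d with Y^c ≠ 0, and assume the differentials of both X and Y are radical maps, i.e., the image of each differential d^n is contained in (X^{n+1})·rad(A), respectively (Y^{n+1})·rad(A), where rad(A) is the Jacobson radical of A. Then Hom_{K(A)}(X, Y⟦c−b⟧) ≠ 0; that is, there exists a chain map X → Y⟦c−b⟧ that is not null-homotopic. -/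

import Mathlib

open CategoryTheory Category Limits

universe u

namespace ForPaper

/-- A finite-dimensional algebra is *symmetric* if it admits a linear form `lam` such that
`lam (a * b) = lam (b * a)` for all `a`, `b`, and such that the associated trace bilinear
form `(a, b) ↦ lam (a * b)` is nondegenerate. -/
def IsSymmetricAlgebra (k : Type*) [Field k] (A : Type*) [Ring A] [Algebra k A] : Prop :=
  ∃ lam : A →ₗ[k] k, (∀ a b : A, lam (a * b) = lam (b * a)) ∧
    (∀ a : A, (∀ b : A, lam (a * b) = 0) → a = 0)

end ForPaper

open ForPaper

/-- The quotient functor from complexes to `K(Mod A)`. -/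
noncomputable abbrev Kq (A : Type u) [Ring A] :
    CochainComplex (ModuleCat.{u} A) ℤ ⥤
      HomotopyCategory (ModuleCat.{u} A) (ComplexShape.up ℤ) :=
  HomotopyCategory.quotient _ _

/-!
The top degree `X^b` maps onto the simple module `A ⧸ J`, `J` the radical, through a linear
form taking the value `1`; it exists by Nakayama because `X^b` is projective and nonzero.
Since `J` is nilpotent, `A` has a nonzero element `s` with `J s = s J = 0`, and `r ↦ r s y`,
for `y ∈ Y^c` on which some linear form is `1`, embeds `A ⧸ J` into `Y^c`. The composite
`X^b → A ⧸ J → Y^c` is nonzero, vanishes on the radical image of the incoming differential, and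
is killed by the outgoing radical differential because `s J = 0`. So it is a chain map
`X → Y⟦c - b⟧` concentrated in degree `b`, and it is not null-homotopic because a homotopy in
that degree factors through `X^(b+1) = 0` or `Y^(c-1) = 0`.
-/

section JacobsonRadical

variable {A : Type*} [Ring A] {M : Type*} [AddCommGroup M] [Module A M]

theorem IsLocalRing.mem_jacobson_of_not_isUnit [IsLocalRing A] [IsDedekindFiniteMonoid A]
    {x : A} (hx : ¬IsUnit x) : x ∈ Ring.jacobson A := by
  rw [Ring.jacobson_eq_sInf_isMaximal, Submodule.mem_sInf]
  intro m hm
  by_contra hxm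
  obtain ⟨y, i, hi, hyx⟩ := Ideal.IsMaximal.exists_inv hm hxm
  rcases IsLocalRing.isUnit_or_isUnit_of_add_one hyx with hu | hu
  · exact hx (isUnit_of_mul_isUnit_right hu)
  · exact hm.ne_top (Ideal.eq_top_of_isUnit_mem m hi hu)

theorem Module.Projective.mem_smul_top_of_forall_apply_mem [Module.Projective A M] {I : Ideal A} {x : M}
    (h : ∀ p : M →ₗ[A] A, p x ∈ I) : x ∈ I • (⊤ : Submodule A M) := by
  obtain ⟨s, hs⟩ := Module.projective_def'.mp ‹_›
  have hx : Finsupp.linearCombination A id (s x) = x := congr($hs x)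
  rw [← hx, Finsupp.linearCombination_apply]
  exact Submodule.sum_mem _ fun m _ ↦
    Submodule.smul_mem_smul (h ((Finsupp.lapply m).comp s)) Submodule.mem_top

variable (M) in
theorem Module.exists_apply_eq_one_of_isLocalRing [IsLocalRing A] [IsDedekindFiniteMonoid A]
    [Module.Finite A M] [Module.Projective A M] [Nontrivial M] : ∃ (p : M →ₗ[A] A) (x : M), p x = 1 := by
  have : ∃ (p : M →ₗ[A] A) (x : M), IsUnit (p x) := by
    by_contra! h
    have htop : (⊤ : Submodule A M) ≤ Ring.jacobson A • ⊤ := fun x _ ↦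
      Projective.mem_smul_top_of_forall_apply_mem fun p ↦
        IsLocalRing.mem_jacobson_of_not_isUnit (h p x)
    exact top_ne_bot (Submodule.FG.eq_bot_of_le_jacobson_smul Module.Finite.fg_top htop)
  obtain ⟨p, x, u, hu⟩ := this
  exact ⟨(LinearMap.toSpanSingleton A A ↑u⁻¹).comp p, x, by simp [← hu]⟩

theorem Ideal.exists_ne_zero_mul_eq_zero_of_isNilpotent [Nontrivial A] {I : Ideal A}
    [I.IsTwoSided] (hI : IsNilpotent I) :
    ∃ s : A, s ≠ 0 ∧ (∀ j ∈ I, j * s = 0) ∧ ∀ j ∈ I, s * j = 0 := by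
  classical
  obtain ⟨n, hn⟩ : ∃ n, I ^ (n + 1) = ⊥ ∧ I ^ n ≠ ⊥ := by
    have h0 : Nat.find hI ≠ 0 := fun h ↦ by
      simpa [h, Submodule.pow_zero] using Nat.find_spec hI
    obtain ⟨n, hn⟩ := Nat.exists_eq_succ_of_ne_zero h0
    refine ⟨n, ?_, Nat.find_min hI (by omega)⟩
    simpa [hn] using Nat.find_spec hI
  obtain ⟨s, hs, hs0⟩ := Submodule.exists_mem_ne_zero_of_ne_bot hn.2
  refine ⟨s, hs0, fun j hj ↦ ?_, fun j hj ↦ ?_⟩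
  · simpa [← Ideal.IsTwoSided.pow_succ, hn.1] using Ideal.mul_mem_mul hj hs
  · simpa [← Submodule.pow_succ, hn.1] using Ideal.mul_mem_mul hs hj

theorem LinearMap.apply_mem_of_mem_smul_top {I : Ideal A} [I.IsTwoSided] (p : M →ₗ[A] A)
    {z : M} (hz : z ∈ I • (⊤ : Submodule A M)) : p z ∈ I := by
  have := Submodule.mem_map_of_mem (f := p) hz
  rw [Submodule.map_smul''] at this
  exact Ideal.mul_top I ▸ Submodule.smul_mono le_rfl le_top this

theorem Submodule.smul_eq_zero_of_mem_smul {I : Ideal A} {s : A} (hs : ∀ j ∈ I, s * j = 0)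
    {N : Submodule A M} {z : M} (hz : z ∈ I • N) : s • z = 0 := by
  refine Submodule.smul_induction_on hz (fun r hr n _ ↦ ?_) fun x y hx hy ↦ ?_
  · rw [smul_smul, hs r hr, zero_smul]
  · rw [smul_add, hx, hy, add_zero]

variable (M) in
theorem Module.exists_linearMap_to_quotient_jacobson [IsLocalRing A] [IsDedekindFiniteMonoid A]
    [Module.Finite A M] [Module.Projective A M] [Nontrivial M] :
    ∃ (φ : M →ₗ[A] A ⧸ Ring.jacobson A) (x : M), φ x = Submodule.Quotient.mk 1 ∧
      Ring.jacobson A • (⊤ : Submodule A M) ≤ LinearMap.ker φ := by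
  obtain ⟨p, x, hpx⟩ := exists_apply_eq_one_of_isLocalRing (A := A) M
  refine ⟨(Ring.jacobson A).mkQ ∘ₗ p, x, by simp [hpx], fun z hz ↦ ?_⟩
  simpa [Ideal.Quotient.eq_zero_iff_mem] using p.apply_mem_of_mem_smul_top hz

variable (M) in
theorem Module.exists_linearMap_from_quotient_jacobson [IsLocalRing A] [IsArtinianRing A]
    [Module.Finite A M] [Module.Projective A M] [Nontrivial M] :
    ∃ ψ : A ⧸ Ring.jacobson A →ₗ[A] M, ψ (Submodule.Quotient.mk 1) ≠ 0 ∧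
      ∀ {N : Type*} [AddCommGroup N] [Module A N] (g : M →ₗ[A] N),
        LinearMap.range g ≤ Ring.jacobson A • ⊤ → g ∘ₗ ψ = 0 := by
  obtain ⟨s, hs0, hJs, hsJ⟩ := (Ring.jacobson A).exists_ne_zero_mul_eq_zero_of_isNilpotent
    (Ideal.jacobson_bot (R := A) ▸ IsArtinianRing.isNilpotent_jacobson_bot)
  obtain ⟨q, y, hqy⟩ := exists_apply_eq_one_of_isLocalRing (A := A) M
  refine ⟨(Ring.jacobson A).liftQ (LinearMap.toSpanSingleton A M (s • y)) fun r hr ↦ ?_, ?_,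
    fun g hg ↦ Submodule.linearMap_qext _ (LinearMap.ext_ring ?_)⟩
  · simp [smul_smul, hJs r hr]
  · intro h
    apply hs0
    simpa only [Submodule.liftQ_apply, LinearMap.toSpanSingleton_apply, one_smul, map_smul, hqy,
      smul_eq_mul, mul_one, map_zero] using congr(q $h)
  · simpa only [LinearMap.comp_apply, Submodule.mkQ_apply, Submodule.liftQ_apply,
      LinearMap.toSpanSingleton_apply, one_smul, map_smul, LinearMap.zero_apply] using
      Submodule.smul_eq_zero_of_mem_smul hsJ (hg ⟨y, rfl⟩)

end JacobsonRadical

namespace HomologicalComplex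

variable {V : Type*} [Category V] [Preadditive V] {ι : Type*} {c : ComplexShape ι}
  [HasZeroObject V] [DecidableEq ι]

theorem exists_hom_f_eq_comp {K L : HomologicalComplex V c} {j : ι} {M : V}
    (φ : K.X j ⟶ M) (ψ : M ⟶ L.X j) (hφ : ∀ i, c.Rel i j → K.d i j ≫ φ = 0)
    (hψ : ∀ k, c.Rel j k → ψ ≫ L.d j k = 0) : ∃ f : K ⟶ L, f.f j = φ ≫ ψ :=
  ⟨mkHomToSingle φ hφ ≫ mkHomFromSingle ψ hψ, by simp⟩

end HomologicalComplex

namespace Homotopy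

variable {V : Type*} [Category V] [Preadditive V] {ι : Type*} {c : ComplexShape ι}

theorem f_eq_of_isZero {K L : HomologicalComplex V c} {f g : K ⟶ L} (h : Homotopy f g) {j : ι}
    (hK : IsZero (K.X (c.next j))) (hL : IsZero (L.X (c.prev j))) : f.f j = g.f j := by
  have hnext : dNext j h.hom = 0 := by simp [dNext, hK.eq_of_src (h.hom _ j) 0]
  have hprev : prevD j h.hom = 0 := by simp [prevD, hL.eq_of_tgt (h.hom j _) 0]
  rw [h.comm j, hnext, hprev, zero_add, zero_add]

end Homotopy

namespace HomotopyCategory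

variable {V : Type*} [Category V] [Preadditive V] {ι : Type*} {c : ComplexShape ι}

theorem quotient_map_ne_zero_of_isZero {K L : HomologicalComplex V c} (f : K ⟶ L) {j : ι}
    (hf : f.f j ≠ 0) (hK : IsZero (K.X (c.next j))) (hL : IsZero (L.X (c.prev j))) :
    (quotient V c).map f ≠ 0 := fun h ↦
  hf ((homotopyOfEq f 0 (by rw [h, Functor.map_zero])).f_eq_of_isZero hK hL)

end HomotopyCategory

theorem CochainComplex.range_d_le_smul_top {A : Type*} [Ring A]
    (K : CochainComplex (ModuleCat A) ℤ) {I : Ideal A}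
    (hK : ∀ n, LinearMap.range (K.d n (n + 1)).hom ≤ I • ⊤) (i j : ℤ) :
    LinearMap.range (K.d i j).hom ≤ I • ⊤ := by
  by_cases h : i + 1 = j
  · subst h
    exact hK i
  · simp [K.shape i j h]

theorem CochainComplex.comp_shiftFunctor_obj_d_eq_zero {C : Type*} [Category C] [Preadditive C]
    (K : CochainComplex C ℤ) {n i : ℤ} {M : C} {ψ : M ⟶ K.X (i + n)}
    (hψ : ∀ j, ψ ≫ K.d (i + n) j = 0) (j : ℤ) : ψ ≫ (K⟦n⟧).d i j = 0 := by
  change ψ ≫ (n.negOnePow • K.d (i + n) (j + n)) = 0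
  rw [Linear.comp_units_smul, hψ, smul_zero]

theorem statement_13_general (k : Type u) [Field k] (A : Type u) [Ring A] [Algebra k A]
    [FiniteDimensional k A] [IsLocalRing A]
    (X Y : CochainComplex (ModuleCat.{u} A) ℤ) (a b c d : ℤ) (hab : a ≤ b) (hcd : c ≤ d)
    (hX : ∀ n : ℤ, a ≤ n → n ≤ b →
      Module.Finite A (X.X n) ∧ Module.Projective A (X.X n) ∧ Nontrivial (X.X n))
    (hX0 : ∀ n : ℤ, (n < a ∨ b < n) → IsZero (X.X n))
    (hY : ∀ n : ℤ, c ≤ n → n ≤ d →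
      Module.Finite A (Y.X n) ∧ Module.Projective A (Y.X n) ∧ Nontrivial (Y.X n))
    (hY0 : ∀ n : ℤ, (n < c ∨ d < n) → IsZero (Y.X n))
    (hXrad : ∀ n : ℤ, LinearMap.range (X.d n (n + 1)).hom ≤
      ((⊥ : Ideal A).jacobson) • (⊤ : Submodule A (X.X (n + 1))))
    (hYrad : ∀ n : ℤ, LinearMap.range (Y.d n (n + 1)).hom ≤
      ((⊥ : Ideal A).jacobson) • (⊤ : Submodule A (Y.X (n + 1)))) :
    ∃ φ : (Kq A).obj X ⟶ (Kq A).obj (Y⟦(c - b)⟧), φ ≠ 0 := by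
  rw [Ideal.jacobson_bot] at hXrad hYrad
  have : IsArtinianRing A := IsArtinianRing.of_finite k A
  obtain ⟨_, _, _⟩ := hX b hab le_rfl
  obtain ⟨_, _, _⟩ := hY (b + (c - b)) (by omega) (by omega)
  obtain ⟨φ, x, hφx, hφ⟩ := Module.exists_linearMap_to_quotient_jacobson (A := A) (X.X b)
  obtain ⟨ψ, hψ0, hψ⟩ :=
    Module.exists_linearMap_from_quotient_jacobson (A := A) (Y.X (b + (c - b)))
  have hφd : ∀ i, (ComplexShape.up ℤ).Rel i b → X.d i b ≫ ModuleCat.ofHom φ = 0 := by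
    rintro i rfl
    ext z
    exact hφ (hXrad i ⟨z, rfl⟩)
  have hψd : ∀ j, ModuleCat.ofHom ψ ≫ Y.d (b + (c - b)) j = 0 := fun j ↦ by
    ext : 1
    simpa using hψ _ (Y.range_d_le_smul_top hYrad _ _)
  obtain ⟨f, hf⟩ := HomologicalComplex.exists_hom_f_eq_comp (L := Y⟦c - b⟧) _ _ hφd
    fun j _ ↦ Y.comp_shiftFunctor_obj_d_eq_zero hψd j
  refine ⟨(Kq A).map f, HomotopyCategory.quotient_map_ne_zero_of_isZero f (j := b) ?_ ?_ ?_⟩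
  · rw [hf]
    intro h
    exact hψ0 (hφx ▸ congr(($h).hom x))
  · rw [CochainComplex.next]
    exact hX0 _ (Or.inr (by omega))
  · rw [CochainComplex.prev]
    exact hY0 (b - 1 + (c - b)) (Or.inl (by omega))

/-- Over a finite-dimensional local symmetric algebra, if `X` is a bounded complex of
nonzero finitely generated projectives concentrated in degrees `a ≤ n ≤ b` and `Y` one
concentrated in degrees `c ≤ n ≤ d`, both with radical differentials, then there is a
non-null-homotopic chain map `X ⟶ Y⟦c - b⟧`. -/
theorem statement_13 (k : Type u) [Field k] (A : Type u) [Ring A] [Algebra k A]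
    [FiniteDimensional k A] [IsLocalRing A] (hA : IsSymmetricAlgebra k A)
    (X Y : CochainComplex (ModuleCat.{u} A) ℤ) (a b c d : ℤ) (hab : a ≤ b) (hcd : c ≤ d)
    (hX : ∀ n : ℤ, a ≤ n → n ≤ b →
      Module.Finite A (X.X n) ∧ Module.Projective A (X.X n) ∧ Nontrivial (X.X n))
    (hX0 : ∀ n : ℤ, (n < a ∨ b < n) → IsZero (X.X n))
    (hY : ∀ n : ℤ, c ≤ n → n ≤ d →
      Module.Finite A (Y.X n) ∧ Module.Projective A (Y.X n) ∧ Nontrivial (Y.X n))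
    (hY0 : ∀ n : ℤ, (n < c ∨ d < n) → IsZero (Y.X n))
    (hXrad : ∀ n : ℤ, LinearMap.range (X.d n (n + 1)).hom ≤
      ((⊥ : Ideal A).jacobson) • (⊤ : Submodule A (X.X (n + 1))))
    (hYrad : ∀ n : ℤ, LinearMap.range (Y.d n (n + 1)).hom ≤
      ((⊥ : Ideal A).jacobson) • (⊤ : Submodule A (Y.X (n + 1)))) :
    ∃ φ : (Kq A).obj X ⟶ (Kq A).obj (Y⟦(c - b)⟧), φ ≠ 0 :=
  statement_13_general k A X Y a b c d hab hcd hX hX0 hY hY0 hXrad hYrad
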